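/- arXiv:2409.00545 — 5 statements merged into one kernel-verified Lean document; each statement's English description precedes it below -/
import Mathlib

section
/- There is no countably infinite universal group; that is, if U is a universal group then U is not countably infinite. -/
open LaurentPolynomial

abbrev R2 := LaurentPolynomial (ZMod 2)

instance : Countable R2 := AddMonoidAlgebra.coeff_injective.countable

@[ext] structure GG where
  a : R2
  b : R2
  c : R2
  m : ℤ

namespace GG

noncomputable instance : Mul GG :=
  ⟨fun x y => ⟨x.a + T x.m * y.a, x.b + T (-x.m) * y.b,
    x.c + y.c + x.a * (T (-x.m) * y.b), x.m + y.m⟩⟩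
noncomputable instance : One GG := ⟨⟨0, 0, 0, 0⟩⟩
noncomputable instance : Inv GG :=
  ⟨fun x => ⟨-(T (-x.m) * x.a), -(T x.m * x.b), -x.c + x.a * x.b, -x.m⟩⟩

@[simp] lemma mul_a (x y : GG) : (x * y).a = x.a + T x.m * y.a := rfl
@[simp] lemma mul_b (x y : GG) : (x * y).b = x.b + T (-x.m) * y.b := rfl
@[simp] lemma mul_c (x y : GG) : (x * y).c = x.c + y.c + x.a * (T (-x.m) * y.b) := rfl
@[simp] lemma mul_m (x y : GG) : (x * y).m = x.m + y.m := rfl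
@[simp] lemma one_a : (1 : GG).a = 0 := rfl
@[simp] lemma one_b : (1 : GG).b = 0 := rfl
@[simp] lemma one_c : (1 : GG).c = 0 := rfl
@[simp] lemma one_m : (1 : GG).m = 0 := rfl
@[simp] lemma inv_a (x : GG) : x⁻¹.a = -(T (-x.m) * x.a) := rfl
@[simp] lemma inv_b (x : GG) : x⁻¹.b = -(T x.m * x.b) := rfl
@[simp] lemma inv_c (x : GG) : x⁻¹.c = -x.c + x.a * x.b := rfl
@[simp] lemma inv_m (x : GG) : x⁻¹.m = -x.m := rfl

lemma Tadd (m n : ℤ) : (T (m + n) : R2) = T m * T n := T_add m n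

lemma TnegT (m : ℤ) : (T (-m) : R2) * T m = 1 := by
  rw [← Tadd, neg_add_cancel, T_zero]

noncomputable instance : Group GG where
  mul_assoc x y z := by
    ext : 1
    · simp only [mul_a, mul_m, Tadd]; ring
    · simp only [mul_b, mul_m, neg_add, Tadd]; ring
    · simp only [mul_a, mul_b, mul_c, mul_m, neg_add, Tadd]
      linear_combination (y.a * T (-y.m) * z.b) * TnegT x.m
    · simp only [mul_m]; ring
  one_mul x := by
    ext : 1 <;>
      simp only [mul_a, mul_b, mul_c, mul_m, one_a, one_b, one_c, one_m, T_zero,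
        one_mul, mul_zero, zero_mul, zero_add, add_zero, neg_zero]
  mul_one x := by
    ext : 1 <;>
      simp only [mul_a, mul_b, mul_c, mul_m, one_a, one_b, one_c, one_m, T_zero,
        one_mul, mul_zero, zero_mul, zero_add, add_zero, neg_zero]
  inv_mul_cancel x := by
    have h := TnegT x.m
    ext : 1
    · simp only [mul_a, inv_a, inv_m, one_a, neg_add_cancel]
    · simp only [mul_b, inv_b, inv_m, one_b, neg_neg, neg_add_cancel]
    · simp only [mul_c, inv_a, inv_b, inv_c, inv_m, one_c, neg_neg]
      linear_combination (-(x.a * x.b)) * h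
    · simp only [mul_m, inv_m, one_m, neg_add_cancel]

end GG

namespace GG

@[simp] lemma mk_a (a b c : R2) (m : ℤ) : (GG.mk a b c m).a = a := rfl
@[simp] lemma mk_b (a b c : R2) (m : ℤ) : (GG.mk a b c m).b = b := rfl
@[simp] lemma mk_c (a b c : R2) (m : ℤ) : (GG.mk a b c m).c = c := rfl
@[simp] lemma mk_m (a b c : R2) (m : ℤ) : (GG.mk a b c m).m = m := rfl

noncomputable def u : GG := ⟨1, 0, 0, 0⟩
noncomputable def v : GG := ⟨0, 1, 0, 0⟩
noncomputable def s : GG := ⟨0, 0, 0, 1⟩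

/-- The subgroup generated by the three generators. -/
noncomputable def J : Subgroup GG := Subgroup.closure {u, v, s}

lemma hu : u ∈ J := Subgroup.subset_closure (by simp)
lemma hv : v ∈ J := Subgroup.subset_closure (by simp)
lemma hs : s ∈ J := Subgroup.subset_closure (by simp)

lemma hz (m : ℤ) : (⟨0, 0, 0, m⟩ : GG) ∈ J := by
  induction m using Int.induction_on with
  | zero => exact (J : Subgroup GG).one_mem
  | succ k ih =>
      have e : (⟨0, 0, 0, ((k : ℤ) + 1)⟩ : GG) = ⟨0, 0, 0, (k : ℤ)⟩ * s := by
        ext : 1 <;> simp [s]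
      rw [e]; exact mul_mem ih hs
  | pred k ih =>
      have e : (⟨0, 0, 0, (-(k : ℤ) - 1)⟩ : GG) = ⟨0, 0, 0, (-(k : ℤ))⟩ * s⁻¹ := by
        ext : 1 <;> simp [s] <;> ring
      rw [e]; exact mul_mem ih (inv_mem hs)

lemma hTa (k : ℤ) : (⟨T k, 0, 0, 0⟩ : GG) ∈ J := by
  have e : (⟨T k, 0, 0, 0⟩ : GG) = ⟨0, 0, 0, k⟩ * u * ⟨0, 0, 0, -k⟩ := by
    ext : 1 <;>
      simp only [mul_a, mul_b, mul_c, mul_m, mk_a, mk_b, mk_c, mk_m, u,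
        mul_zero, zero_mul, add_zero, zero_add, mul_one, add_neg_cancel]
  rw [e]; exact mul_mem (mul_mem (hz k) hu) (hz (-k))

lemma hTb (k : ℤ) : (⟨0, T k, 0, 0⟩ : GG) ∈ J := by
  have e : (⟨0, T k, 0, 0⟩ : GG) = ⟨0, 0, 0, -k⟩ * v * ⟨0, 0, 0, k⟩ := by
    ext : 1 <;>
      simp only [mul_a, mul_b, mul_c, mul_m, mk_a, mk_b, mk_c, mk_m, v, neg_neg,
        mul_zero, zero_mul, add_zero, zero_add, mul_one, neg_add_cancel]
  rw [e]; exact mul_mem (mul_mem (hz (-k)) hv) (hz k)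

lemma zmod2cases : ∀ x : ZMod 2, x = 0 ∨ x = 1 := by decide

lemma hA (f : R2) : (⟨f, 0, 0, 0⟩ : GG) ∈ J := by
  induction f using AddMonoidAlgebra.induction with
  | zero => exact (J : Subgroup GG).one_mem
  | single_add k b f hk hb ih =>
      rcases zmod2cases b with h0 | h1
      · exact absurd h0 hb
      subst h1
      have e : (⟨AddMonoidAlgebra.single k 1 + f, 0, 0, 0⟩ : GG) = ⟨T k, 0, 0, 0⟩ * ⟨f, 0, 0, 0⟩ := by
        ext : 1 <;>
          simp only [mul_a, mul_b, mul_c, mul_m, mk_a, mk_b, mk_c, mk_m, T_zero,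
            mul_zero, zero_mul, add_zero, zero_add, one_mul] <;> rfl
      rw [e]; exact mul_mem (hTa k) ih

lemma hB (f : R2) : (⟨0, f, 0, 0⟩ : GG) ∈ J := by
  induction f using AddMonoidAlgebra.induction with
  | zero => exact (J : Subgroup GG).one_mem
  | single_add k b f hk hb ih =>
      rcases zmod2cases b with h0 | h1
      · exact absurd h0 hb
      subst h1
      have e : (⟨0, AddMonoidAlgebra.single k 1 + f, 0, 0⟩ : GG) = ⟨0, T k, 0, 0⟩ * ⟨0, f, 0, 0⟩ := by
        ext : 1 <;>
          simp only [mul_a, mul_b, mul_c, mul_m, mk_a, mk_b, mk_c, mk_m, T_zero, neg_zero,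
            mul_zero, zero_mul, add_zero, zero_add, one_mul] <;> rfl
      rw [e]; exact mul_mem (hTb k) ih

lemma hC (h : R2) : (⟨0, 0, h, 0⟩ : GG) ∈ J := by
  have e : (⟨0, 0, h, 0⟩ : GG) = (u * ⟨0, h, 0, 0⟩) * (⟨0, h, 0, 0⟩ * u)⁻¹ := by
    ext : 1 <;>
      simp only [mul_a, mul_b, mul_c, mul_m, inv_a, inv_b, inv_c, inv_m,
        mk_a, mk_b, mk_c, mk_m, u, T_zero, neg_zero,
        mul_zero, zero_mul, add_zero, zero_add, one_mul, mul_one] <;> ring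
  rw [e]; exact mul_mem (mul_mem hu (hB h)) (inv_mem (mul_mem (hB h) hu))

lemma mem_J (x : GG) : x ∈ J := by
  have e : x = ⟨x.a, 0, 0, 0⟩ * ⟨0, x.b, 0, 0⟩ * ⟨0, 0, x.c - x.a * x.b, 0⟩ * ⟨0, 0, 0, x.m⟩ := by
    ext : 1 <;>
      simp only [mul_a, mul_b, mul_c, mul_m, mk_a, mk_b, mk_c, mk_m, T_zero, neg_zero,
        mul_zero, zero_mul, add_zero, zero_add, one_mul, mul_one] <;> ring
  rw [e]
  exact mul_mem (mul_mem (mul_mem (hA x.a) (hB x.b)) (hC _)) (hz x.m)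

lemma central (h : R2) (x : GG) : x * ⟨0, 0, h, 0⟩ = ⟨0, 0, h, 0⟩ * x := by
  ext : 1 <;>
    simp only [mul_a, mul_b, mul_c, mul_m, mk_a, mk_b, mk_c, mk_m, T_zero, neg_zero,
      mul_zero, zero_mul, add_zero, zero_add, one_mul, mul_one] <;> ring

/-- The uncountable family of (central, hence normal) subgroups. -/
noncomputable def W (S : Set ℤ) : Subgroup GG where
  carrier := {x | x.a = 0 ∧ x.b = 0 ∧ x.m = 0 ∧ ∀ k ∉ S, x.c.coeff k = 0}
  one_mem' := ⟨rfl, rfl, rfl, fun _ _ => rfl⟩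
  mul_mem' := by
    rintro x y ⟨ha, hb, hm, hc⟩ ⟨ha', hb', hm', hc'⟩
    refine ⟨?_, ?_, ?_, ?_⟩
    · simp only [mul_a, ha, ha', mul_zero, add_zero]
    · simp only [mul_b, hb, hb', mul_zero, add_zero]
    · simp only [mul_m, hm, hm', add_zero]
    · intro k hk
      have : (x * y).c = x.c + y.c := by
        simp only [mul_c, ha, zero_mul, add_zero]
      rw [this]
      have : (x.c + y.c).coeff k = x.c.coeff k + y.c.coeff k := rfl
      rw [this, hc k hk, hc' k hk, add_zero]
  inv_mem' := by
    rintro x ⟨ha, hb, hm, hc⟩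
    refine ⟨?_, ?_, ?_, ?_⟩
    · simp only [inv_a, ha, mul_zero, neg_zero]
    · simp only [inv_b, hb, mul_zero, neg_zero]
    · simp only [inv_m, hm, neg_zero]
    · intro k hk
      have : (x⁻¹).c = -x.c := by
        simp only [inv_c, ha, zero_mul, add_zero]
      rw [this]
      have : (-x.c).coeff k = -(x.c.coeff k) := rfl
      rw [this, hc k hk, neg_zero]

lemma mem_W {S : Set ℤ} {x : GG} :
    x ∈ W S ↔ x.a = 0 ∧ x.b = 0 ∧ x.m = 0 ∧ ∀ k ∉ S, x.c.coeff k = 0 := Iff.rfl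

instance Wnormal (S : Set ℤ) : (W S).Normal := by
  constructor
  intro n hn g
  have hn' := hn
  obtain ⟨ha, hb, hm, -⟩ := hn'
  have hshape : n = ⟨0, 0, n.c, 0⟩ := by
    ext : 1 <;> simp only [mk_a, mk_b, mk_c, mk_m, ha, hb, hm]
  have : g * n * g⁻¹ = n := by
    rw [hshape, central n.c g, mul_assoc, mul_inv_cancel, mul_one]
  rw [this]; exact hn

lemma W_le {S₁ S₂ : Set ℤ} (h : W S₁ ≤ W S₂) : S₁ ⊆ S₂ := by
  intro k hk
  by_contra hk2
  have hmem : (⟨0, 0, T k, 0⟩ : GG) ∈ W S₁ := by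
    refine ⟨rfl, rfl, rfl, fun j hj => ?_⟩
    have : j ≠ k := fun e => hj (e ▸ hk)
    simp only [mk_c, T_apply]
    exact if_neg fun e => this e.symm
  have h2 := (h hmem).2.2.2 k hk2
  simp only [mk_c, T_apply] at h2
  simp only [if_true] at h2
  exact one_ne_zero h2

lemma W_inj : Function.Injective W := fun _ _ h =>
  Set.Subset.antisymm (W_le (le_of_eq h)) (W_le (le_of_eq h.symm))

noncomputable instance : Countable GG := by
  have : Function.Injective (fun x : GG => (x.a, x.b, x.c, x.m)) := by
    intro x y h
    simp only [Prod.mk.injEq] at h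
    ext : 1 <;> tauto
  exact this.countable

instance (S : Set ℤ) : Countable (GG ⧸ W S) :=
  inferInstanceAs (Countable (Quotient (QuotientGroup.leftRel (W S))))

end GG

universe u

/-- A group `U` is universal if every group of cardinality at most `|U|` embeds into it. -/
def IsUniversalGroup (U : Type u) [Group U] : Prop :=
  ∀ (K : Type u) [Group K], Cardinal.mk K ≤ Cardinal.mk U →
    ∃ f : K →* U, Function.Injective f

/-- There is no countably infinite universal group. -/
theorem stmt_2 (U : Type u) [Group U] (hU : IsUniversalGroup U) :
    ¬ (Countable U ∧ Infinite U) := by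
  rintro ⟨hc, hi⟩
  have key : ∀ S : Set ℤ, ∃ g : GG →* U, ∀ x : GG, g x = 1 ↔ x ∈ GG.W S := by
    intro S
    have hcard : Cardinal.mk (ULift.{u} (GG ⧸ GG.W S)) ≤ Cardinal.mk U :=
      le_trans Cardinal.mk_le_aleph0 (Cardinal.aleph0_le_mk U)
    obtain ⟨f, hf⟩ := hU (ULift.{u} (GG ⧸ GG.W S)) hcard
    refine ⟨f.comp ((MulEquiv.ulift.symm.toMonoidHom).comp (QuotientGroup.mk' (GG.W S))), ?_⟩
    intro x
    rw [MonoidHom.comp_apply, MonoidHom.comp_apply, map_eq_one_iff f hf]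
    simp only [MulEquiv.coe_toMonoidHom]
    rw [map_eq_one_iff MulEquiv.ulift.symm (MulEquiv.injective _)]
    exact QuotientGroup.eq_one_iff x
  choose g hg using key
  have hinj : Function.Injective (fun S : Set ℤ => (g S GG.u, g S GG.v, g S GG.s)) := by
    intro S₁ S₂ h
    simp only [Prod.mk.injEq] at h
    obtain ⟨h1, h2, h3⟩ := h
    have hgg : g S₁ = g S₂ := by
      ext x
      refine Subgroup.closure_induction (k := {GG.u, GG.v, GG.s}) ?_ ?_ ?_ ?_ (GG.mem_J x)
      · intro y hy
        simp only [Set.mem_insert_iff, Set.mem_singleton_iff] at hy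
        rcases hy with rfl | rfl | rfl
        exacts [h1, h2, h3]
      · simp only [map_one]
      · intro a b _ _ ha hb
        simp only [map_mul, ha, hb]
      · intro a _ ha
        simp only [map_inv, ha]
    have hW : GG.W S₁ = GG.W S₂ := by
      ext x
      rw [← hg S₁ x, ← hg S₂ x, hgg]
    exact GG.W_inj hW
  have hcount : Countable (Set ℤ) := hinj.countable
  have hle : Cardinal.mk (Set ℤ) ≤ Cardinal.aleph0 := Cardinal.mk_le_aleph0
  rw [Cardinal.mk_set, Cardinal.mk_int] at hle
  exact absurd hle (not_le.mpr (Cardinal.cantor _))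
end

section
/- Let κ be an uncountable cardinal and let A and B be structures (over a common first-order language) that are strongly κ-partially isomorphic, with |A| = |B| = κ. Then A and B are isomorphic. -/
universe u

open FirstOrder Cardinal

variable (L : FirstOrder.Language.{u, u})

/-- A partial isomorphism from `A` to `B`: an isomorphism between a substructure of `A`
and a substructure of `B`. -/
structure LPartialIso (A B : Type u) [L.Structure A] [L.Structure B] where
  dom : L.Substructure A
  ran : L.Substructure B
  equiv : dom ≃[L] ran

variable {A B : Type u} [L.Structure A] [L.Structure B]

/-- `g` extends `f` as a partial isomorphism (`f ⊆ g` as sets of pairs). -/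
def LPartialIso.Extends (f g : LPartialIso L A B) : Prop :=
  ∃ h : f.dom ≤ g.dom, ∀ x : f.dom,
    (g.equiv ⟨x.1, SetLike.le_def.mp h x.2⟩ : B) = (f.equiv x : B)

/-- `I` witnesses that `A` and `B` are strongly `κ`-partially isomorphic:
(i) each `f ∈ I` extends to cover any subset of `A` of size `< κ` in its domain;
(ii) each `f ∈ I` extends to cover any subset of `B` of size `< κ` in its range;
(iii) `I` is closed under unions of chains of length `< cf(κ)`. -/
def IsStrongWitness (κ : Cardinal.{u}) (I : Set (LPartialIso L A B)) : Prop :=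
  (∀ f ∈ I, ∀ X : Set A, #X < κ →
    ∃ g ∈ I, f.Extends L g ∧ X ⊆ (g.dom : Set A)) ∧
  (∀ f ∈ I, ∀ Y : Set B, #Y < κ →
    ∃ g ∈ I, f.Extends L g ∧ Y ⊆ (g.ran : Set B)) ∧
  (∀ (ι : Type u) (_ : LinearOrder ι), Nonempty ι → #ι < (Cardinal.ord κ).cof →
    ∀ c : ι → LPartialIso L A B, (∀ i, c i ∈ I) →
      (∀ i j, i ≤ j → (c i).Extends L (c j)) →
      ∃ g ∈ I, (∀ i, (c i).Extends L g) ∧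
        (g.dom : Set A) = ⋃ i, ((c i).dom : Set A))

/-- `A` and `B` are strongly `κ`-partially isomorphic. -/
def StronglyPartiallyIsomorphic (κ : Cardinal.{u}) (A B : Type u)
    [L.Structure A] [L.Structure B] : Prop :=
  ∃ I : Set (LPartialIso L A B), I.Nonempty ∧ IsStrongWitness L κ I

/-!
Enumerate `A` and `B` in order type `κ` and fix a cofinal subset `S` of `κ` of order type
`cf κ`. By recursion along `S` build an increasing chain in `I` whose stage `s` has the first
`s` elements of `A` in its domain and the first `s` elements of `B` in its range: the earlier
stages form a chain of length `< cf κ`, bounded in `I` by (iii), and (i), (ii) extend the bound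
over these initial segments, which have size `< κ` since `κ` is infinite. The union of the
chain is a partial isomorphism defined on all of `A` and onto all of `B`.
-/

open Set

variable {L}

namespace LPartialIso

def toPartialEquiv (f : LPartialIso L A B) : A ≃ₚ[L] B := ⟨f.dom, f.ran, f.equiv⟩

instance : Preorder (LPartialIso L A B) := Preorder.lift toPartialEquiv

theorem extends_iff_le {f g : LPartialIso L A B} : f.Extends L g ↔ f ≤ g := by
  refine exists_congr fun _ => ?_
  rw [Language.Embedding.ext_iff]
  rfl

end LPartialIso

theorem exists_monotone_chain {P ι : Type*} [Preorder P] [LinearOrder ι] [WellFoundedLT ι]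
    {I : Set P} (hI : I.Nonempty)
    (hbound : ∀ i : ι, Nonempty (Iio i) → ∀ c : Iio i → P, Monotone c → (∀ j, c j ∈ I) →
      ∃ g ∈ I, ∀ j, c j ≤ g)
    {Q : ι → P → Prop} (hQ : ∀ i, ∀ f ∈ I, ∃ g ∈ I, f ≤ g ∧ Q i g) :
    ∃ G : ι → P, Monotone G ∧ ∀ i, G i ∈ I ∧ Q i (G i) := by
  classical
  obtain ⟨f₀, hf₀⟩ := hI
  have hstep : ∀ i (G : ι → P), (∀ j < i, G j ∈ I) → (∀ j k, j ≤ k → k < i → G j ≤ G k) →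
      ∃ g ∈ I, (∀ j < i, G j ≤ g) ∧ Q i g := by
    intro i G hGI hGmono
    obtain ⟨g₁, hg₁I, hg₁⟩ : ∃ g ∈ I, ∀ j : Iio i, G j ≤ g := by
      rcases isEmpty_or_nonempty (Iio i) with hempty | hne
      · exact ⟨f₀, hf₀, fun j => hempty.elim j⟩
      · exact hbound i hne (fun j => G j) (fun j k hjk => hGmono j k hjk k.2) (fun j => hGI j j.2)
    obtain ⟨g, hgI, hg₁g, hQg⟩ := hQ i g₁ hg₁I
    exact ⟨g, hgI, fun j hj => (hg₁ ⟨j, hj⟩).trans hg₁g, hQg⟩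
  let step : ∀ i : ι, (∀ j < i, P) → P := fun i G =>
    if h : ∃ g ∈ I, (∀ j (hj : j < i), G j hj ≤ g) ∧ Q i g then h.choose else f₀
  let G : ι → P := WellFoundedLT.fix step
  have hG : ∀ i, G i ∈ I ∧ Q i (G i) ∧ ∀ j < i, G j ≤ G i := by
    intro i
    induction i using WellFoundedLT.induction with
    | _ i IH =>
    have hex := hstep i G (fun j hj => (IH j hj).1)
      fun j k hjk hk => hjk.eq_or_lt.elim (fun h => h ▸ le_rfl) fun h => (IH k hk).2.2 j h
    have hGi : G i = hex.choose := by
      rw [show G i = step i fun j _ => G j from WellFoundedLT.fix_eq step i]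
      exact dif_pos hex
    obtain ⟨hgI, hgle, hgQ⟩ := hex.choose_spec
    rw [hGi]
    exact ⟨hgI, hgQ, hgle⟩
  refine ⟨G, fun j k hjk => ?_, fun i => ⟨(hG i).1, (hG i).2.1⟩⟩
  rcases hjk.eq_or_lt with rfl | hlt
  · exact le_rfl
  · exact (hG k).2.2 j hlt

namespace IsStrongWitness

variable {κ : Cardinal.{u}} {I : Set (LPartialIso L A B)}

theorem exists_le_of_monotone (hI : IsStrongWitness L κ I) {ι : Type u} [LinearOrder ι]
    [Nonempty ι] (hι : #ι < κ.ord.cof) (c : ι → LPartialIso L A B) (hc : Monotone c)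
    (hcI : ∀ i, c i ∈ I) : ∃ g ∈ I, ∀ i, c i ≤ g := by
  obtain ⟨g, hgI, hcg, -⟩ := hI.2.2 ι inferInstance ‹_› hι c hcI
    fun _ _ hij => LPartialIso.extends_iff_le.2 (hc hij)
  exact ⟨g, hgI, fun i => LPartialIso.extends_iff_le.1 (hcg i)⟩

theorem exists_le_subset (hI : IsStrongWitness L κ I) {f : LPartialIso L A B} (hf : f ∈ I)
    {X : Set A} {Y : Set B} (hX : #X < κ) (hY : #Y < κ) :
    ∃ g ∈ I, f ≤ g ∧ X ⊆ g.dom ∧ Y ⊆ g.ran := by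
  obtain ⟨g₁, hg₁I, hfg₁, hXg₁⟩ := hI.1 f hf X hX
  obtain ⟨g, hgI, hg₁g, hYg⟩ := hI.2.1 g₁ hg₁I Y hY
  rw [LPartialIso.extends_iff_le] at hfg₁ hg₁g
  exact ⟨g, hgI, hfg₁.trans hg₁g, hXg₁.trans (Language.PartialEquiv.dom_le_dom hg₁g), hYg⟩

end IsStrongWitness

theorem Cardinal.mk_Iic_ord_toType_lt {κ : Cardinal.{u}} (hκ : ℵ₀ ≤ κ) (t : κ.ord.ToType) :
    #(Iic t) < κ := by
  have hIio : #(Iio t) < κ := by simpa using mk_Iio_lt t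
  calc #(Iic t) = #(insert t (Iio t) : Set κ.ord.ToType) := by rw [Iio_insert]
    _ ≤ #(Iio t) + 1 := mk_insert_le
    _ < κ := add_lt_of_lt hκ hIio (one_lt_aleph0.trans_le hκ)

theorem Ordinal.exists_isCofinal_mk_Iio_lt_cof (o : Ordinal.{u}) :
    ∃ S : Set o.ToType, IsCofinal S ∧ ∀ s : S, #(Iio s) < o.cof := by
  obtain ⟨S, hS, htype⟩ := exists_ord_cof_eq o.ToType
  rw [cof_toType] at htype
  have hcard : #S = o.cof := by rw [← card_ord o.cof, ← htype]; rfl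
  exact ⟨S, hS, fun s => hcard ▸ mk_Iio_lt s (by rw [hcard, htype])⟩

theorem FirstOrder.Language.PartialEquiv.nonempty_equiv_of_forall_mem {ι : Type*} [Preorder ι]
    [Nonempty ι] [IsDirectedOrder ι] (S : ι →o A ≃ₚ[L] B) (hdom : ∀ a, ∃ i, a ∈ (S i).dom)
    (hcod : ∀ b, ∃ i, b ∈ (S i).cod) : Nonempty (A ≃[L] B) := by
  refine ⟨toEquivOfEqTop (f := DirectLimit.partialEquivLimit S) (eq_top_iff.2 fun a _ => ?_)
    (eq_top_iff.2 fun b _ => ?_)⟩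
  · obtain ⟨i, hi⟩ := hdom a
    exact le_iSup (fun i => (S i).dom) i hi
  · obtain ⟨i, hi⟩ := hcod b
    exact le_iSup (fun i => (S i).cod) i hi

/-- Strongly `κ`-partially isomorphic structures of cardinality `κ` (for uncountable `κ`)
are isomorphic. -/
theorem stmt_6 (κ : Cardinal.{u}) (hκ : Cardinal.aleph0 < κ)
    (A B : Type u) [L.Structure A] [L.Structure B]
    (hA : #A = κ) (hB : #B = κ)
    (h : StronglyPartiallyIsomorphic L κ A B) : Nonempty (A ≃[L] B) := by
  obtain ⟨I, hI, hW⟩ := h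
  obtain ⟨eA⟩ : Nonempty (A ≃ κ.ord.ToType) := Cardinal.eq.1 (hA.trans (mk_ord_toType κ).symm)
  obtain ⟨eB⟩ : Nonempty (B ≃ κ.ord.ToType) := Cardinal.eq.1 (hB.trans (mk_ord_toType κ).symm)
  obtain ⟨S, hS, hSlt⟩ := κ.ord.exists_isCofinal_mk_Iio_lt_cof
  have hsmall {γ : Type u} (e : γ ≃ κ.ord.ToType) (t) : #(e ⁻¹' Iic t) < κ := by
    rw [mk_preimage_equiv]
    exact mk_Iic_ord_toType_lt hκ.le t
  obtain ⟨G, hGmono, hG⟩ := exists_monotone_chain (ι := S) hI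
    (fun s _ c hc hcI => hW.exists_le_of_monotone (hSlt s) c hc hcI)
    (Q := fun s g => eA ⁻¹' Iic s ⊆ g.dom ∧ eB ⁻¹' Iic s ⊆ g.ran)
    (fun s _ hf => hW.exists_le_subset hf (hsmall eA s) (hsmall eB s))
  have : Nonempty A := mk_ne_zero_iff.1 (hA ▸ (aleph0_pos.trans hκ).ne')
  have : Nonempty κ.ord.ToType := eA.symm.nonempty
  have : Nonempty S := hS.nonempty.to_subtype
  refine Language.PartialEquiv.nonempty_equiv_of_forall_mem
    ⟨fun s : S => (G s).toPartialEquiv, hGmono⟩ (fun a => ?_) (fun b => ?_)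
  · obtain ⟨s, hs, has⟩ := hS (eA a)
    exact ⟨⟨s, hs⟩, (hG ⟨s, hs⟩).2.1 has⟩
  · obtain ⟨s, hs, hbs⟩ := hS (eB b)
    exact ⟨⟨s, hs⟩, (hG ⟨s, hs⟩).2.2 hbs⟩
end

section
/- Let κ be an uncountable cardinal. Then any two κ-existentially closed groups of cardinality κ are isomorphic. -/
/-!
Back and forth along an enumeration of `G ⊕ H` of length `κ`. Call `R ⊆ G × H` a partial
isomorphism when `p.1 ↦ p.2` extends to an isomorphism of the subgroups generated by the two
projections of `R`. Given such an `R` with `|R| < κ` and `g ∈ G`, amalgamate `G` and `H` over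
these subgroups: in the amalgam, `g` solves the system "`w(x, R.2) = 1` exactly when
`w(g, R.1) = 1`" of fewer than `κ` equations and inequations over `H`, so `H` contains a solution
`h`, and `R ∪ {(g, h)}` is again a partial isomorphism. Every stage adds a single pair, so the
stages before the `i`-th have at most `|{j | j < i}| < κ` pairs even when `κ` is singular. The
union of all stages is a partial isomorphism whose projections are onto, i.e. an isomorphism.
-/

universe u

/-- `G` is `κ`-existentially closed: every system of fewer than `κ` equations and fewer than
`κ` inequations (words in the free product of `G` with free variables `X`), which has a
solution in some overgroup of `G`, already has a solution in `G`. -/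
def IsKappaEC (κ : Cardinal.{u}) (G : Type u) [Group G] : Prop :=
  ∀ (X : Type u) (eqs ineqs : Set (FreeGroup (G ⊕ X))),
    Cardinal.mk eqs < κ → Cardinal.mk ineqs < κ →
    (∃ (H : Type u) (_ : Group H) (i : G →* H), Function.Injective i ∧
      ∃ v : X → H,
        (∀ w ∈ eqs, FreeGroup.lift (Sum.elim (⇑i) v) w = 1) ∧
        (∀ w ∈ ineqs, FreeGroup.lift (Sum.elim (⇑i) v) w ≠ 1)) →
    ∃ v : X → G,
      (∀ w ∈ eqs, FreeGroup.lift (Sum.elim (id : G → G) v) w = 1) ∧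
      (∀ w ∈ ineqs, FreeGroup.lift (Sum.elim (id : G → G) v) w ≠ 1)

open Cardinal Function Set

theorem FreeGroup.lift_comp_map {α β M : Type*} [Group M] (f : α → β) (g : β → M) :
    (FreeGroup.lift g).comp (FreeGroup.map f) = FreeGroup.lift (g ∘ f) :=
  FreeGroup.ext_hom _ _ fun _ => by simp

theorem FreeGroup.exists_mem_range_map_inclusion {α : Type*} {c : Set (Set α)}
    (hc : DirectedOn (· ⊆ ·) c) (hne : c.Nonempty) (w : FreeGroup (⋃₀ c)) :
    ∃ s, ∃ hs : s ∈ c, w ∈ (FreeGroup.map (inclusion (subset_sUnion_of_mem hs))).range := by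
  have mono : ∀ {s t} (hs : s ∈ c) (ht : t ∈ c), s ⊆ t →
      (FreeGroup.map (inclusion (subset_sUnion_of_mem hs))).range ≤
        (FreeGroup.map (inclusion (subset_sUnion_of_mem ht))).range := by
    rintro s t hs ht hst _ ⟨u, rfl⟩
    exact ⟨FreeGroup.map (inclusion hst) u, by rw [FreeGroup.map.comp]; rfl⟩
  induction w using FreeGroup.induction_on with
  | C1 => exact ⟨hne.some, hne.some_mem, one_mem _⟩
  | of x =>
    obtain ⟨s, hs, hxs⟩ := mem_sUnion.mp x.2
    exact ⟨s, hs, FreeGroup.of ⟨x, hxs⟩, FreeGroup.map.of⟩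
  | inv_of x ih =>
    obtain ⟨s, hs, hx⟩ := ih
    exact ⟨s, hs, inv_mem hx⟩
  | mul x y ihx ihy =>
    obtain ⟨s, hs, hx⟩ := ihx
    obtain ⟨t, ht, hy⟩ := ihy
    obtain ⟨r, hr, hsr, htr⟩ := hc s hs t ht
    exact ⟨r, hr, mul_mem (mono hs hr hsr hx) (mono ht hr htr hy)⟩

theorem exists_injective_comp_eq_of_ker_eq {F G H : Type u} [Group F] [Group G] [Group H]
    (f : F →* G) (f' : F →* H) (hker : f.ker = f'.ker) :
    ∃ (K : Type u) (_ : Group K) (i : G →* K) (j : H →* K),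
      Injective i ∧ Injective j ∧ i.comp f = j.comp f' := by
  let φ : F ⧸ f.ker →* G := QuotientGroup.kerLift f
  let φ' : F ⧸ f.ker →* H :=
    (QuotientGroup.kerLift f').comp (QuotientGroup.quotientMulEquivOfEq hker).toMonoidHom
  -- amalgamate inside `G × H`, so that the pushout is over a constant family of groups
  let ψ : Bool → (F ⧸ f.ker →* G × H) := fun b =>
    if b then (MonoidHom.inr G H).comp φ' else (MonoidHom.inl G H).comp φ
  have hψ : ∀ b, Injective (ψ b) := by
    rintro (_ | _)
    · exact Prod.mk_left_injective 1 |>.comp (QuotientGroup.kerLift_injective f)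
    · exact Prod.mk_right_injective 1 |>.comp
        ((QuotientGroup.kerLift_injective f').comp (MulEquiv.injective _))
  refine ⟨Monoid.PushoutI ψ, inferInstance,
    (Monoid.PushoutI.of false).comp (MonoidHom.inl G H),
    (Monoid.PushoutI.of true).comp (MonoidHom.inr G H),
    (Monoid.PushoutI.of_injective hψ false).comp (Prod.mk_left_injective 1),
    (Monoid.PushoutI.of_injective hψ true).comp (Prod.mk_right_injective 1), ?_⟩
  ext x
  simp only [MonoidHom.coe_comp, comp_apply, MonoidHom.inl_apply, MonoidHom.inr_apply]
  have h₁ : ((f x, 1) : G × H) = ψ false (QuotientGroup.mk x) := rfl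
  have h₂ : ((1, f' x) : G × H) = ψ true (QuotientGroup.mk x) := rfl
  rw [h₁, h₂, Monoid.PushoutI.of_apply_eq_base, Monoid.PushoutI.of_apply_eq_base]

section PartialIso

variable {G H : Type u} [Group G] [Group H]

/-- `a i ↦ b i` extends to an isomorphism between the subgroups generated by `a` and by `b`. -/
def IsPartialIso {ι : Type*} (a : ι → G) (b : ι → H) : Prop :=
  (FreeGroup.lift a).ker = (FreeGroup.lift b).ker

def IsPartialIsoRel (R : Set (G × H)) : Prop :=
  IsPartialIso (fun p : R => p.1.1) (fun p : R => p.1.2)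

namespace IsPartialIso

variable {ι : Type*} {a : ι → G} {b : ι → H}

theorem symm (hab : IsPartialIso a b) : IsPartialIso b a :=
  Eq.symm hab

theorem comp (hab : IsPartialIso a b) {κ : Type*} (σ : κ → ι) :
    IsPartialIso (a ∘ σ) (b ∘ σ) := by
  rw [IsPartialIso, ← FreeGroup.lift_comp_map, ← FreeGroup.lift_comp_map, ← MonoidHom.comap_ker,
    ← MonoidHom.comap_ker, hab]

theorem isPartialIsoRel_of_subset_range (hab : IsPartialIso a b) {R : Set (G × H)}
    (hR : R ⊆ range fun i => (a i, b i)) : IsPartialIsoRel R := by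
  choose σ hσ using fun p : R => hR p.2
  have ha : (fun p : R => p.1.1) = a ∘ σ := funext fun p => (congrArg Prod.fst (hσ p)).symm
  have hb : (fun p : R => p.1.2) = b ∘ σ := funext fun p => (congrArg Prod.snd (hσ p)).symm
  rw [IsPartialIsoRel, ha, hb]
  exact hab.comp σ

theorem nonempty_mulEquiv (hab : IsPartialIso a b) (ha : Surjective (FreeGroup.lift a))
    (hb : Surjective (FreeGroup.lift b)) : Nonempty (G ≃* H) :=
  ⟨(QuotientGroup.quotientKerEquivOfSurjective _ ha).symm.trans
    ((QuotientGroup.quotientMulEquivOfEq hab).trans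
      (QuotientGroup.quotientKerEquivOfSurjective _ hb))⟩

end IsPartialIso

theorem isPartialIsoRel_sUnion {c : Set (Set (G × H))} (hc : DirectedOn (· ⊆ ·) c)
    (h : ∀ R ∈ c, IsPartialIsoRel R) : IsPartialIsoRel (⋃₀ c) := by
  rcases c.eq_empty_or_nonempty with rfl | hne
  · rw [sUnion_empty]
    ext w
    simp [Subsingleton.elim w 1]
  ext w
  obtain ⟨R, hR, u, rfl⟩ := FreeGroup.exists_mem_range_map_inclusion hc hne w
  simp only [MonoidHom.mem_ker, ← MonoidHom.comp_apply, FreeGroup.lift_comp_map]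
  exact SetLike.ext_iff.mp (h R hR) u

end PartialIso

section KappaEC

variable {κ : Cardinal.{u}} {G H : Type u} [Group G] [Group H]

theorem IsKappaEC.exists_eq_one_iff (hκ : ℵ₀ < κ) (hH : IsKappaEC κ H) {ι : Type u}
    (hι : #ι < κ) (b : ι → H) {K : Type u} [Group K] (j : H →* K) (hj : Injective j) (y : K) :
    ∃ h : H, ∀ w : FreeGroup (Option ι),
      FreeGroup.lift (fun o => o.elim h b) w = 1 ↔
        FreeGroup.lift (fun o => o.elim y (j ∘ b)) w = 1 := by
  let Φ : FreeGroup (Option ι) →* FreeGroup (H ⊕ PUnit.{u + 1}) :=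
    FreeGroup.map fun o => o.elim (Sum.inr PUnit.unit) (Sum.inl ∘ b)
  have hΦ : ∀ {M : Type u} [Group M] (c : H → M) (v : PUnit.{u + 1} → M) w,
      FreeGroup.lift (Sum.elim c v) (Φ w) =
        FreeGroup.lift (fun o => o.elim (v .unit) (c ∘ b)) w := by
    intro M _ c v w
    rw [← MonoidHom.comp_apply, FreeGroup.lift_comp_map]
    congr 2
    ext (_ | _) <;> rfl
  have hsmall : ∀ s : Set (FreeGroup (Option ι)), #(Φ '' s) < κ := fun s =>
    (mk_image_le.trans (mk_set_le s)).trans_lt <| by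
      rw [mk_freeGroup, mk_option]
      exact max_lt (add_lt_of_lt hκ.le hι (one_lt_aleph0.trans hκ)) hκ
  let S : Set (FreeGroup (Option ι)) := {w | FreeGroup.lift (fun o => o.elim y (j ∘ b)) w = 1}
  obtain ⟨v, hv₁, hv₂⟩ := hH PUnit (Φ '' S) (Φ '' Sᶜ) (hsmall S) (hsmall Sᶜ)
    ⟨K, inferInstance, j, hj, fun _ => y, by rintro _ ⟨w, hw, rfl⟩; rwa [hΦ],
      by rintro _ ⟨w, hw, rfl⟩; rwa [hΦ]⟩
  refine ⟨v .unit, fun w => ⟨fun hw => ?_, fun hw => ?_⟩⟩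
  · by_contra hw'
    exact hv₂ _ ⟨w, hw', rfl⟩ (by rwa [hΦ])
  · simpa [hΦ] using hv₁ _ ⟨w, hw, rfl⟩

theorem IsPartialIso.exists_option_right (hκ : ℵ₀ < κ) (hH : IsKappaEC κ H) {ι : Type u}
    (hι : #ι < κ) {a : ι → G} {b : ι → H} (hab : IsPartialIso a b) (g : G) :
    ∃ h : H, IsPartialIso (fun o : Option ι => o.elim g a) (fun o => o.elim h b) := by
  obtain ⟨K, _, i, j, hi, hj, hij⟩ := exists_injective_comp_eq_of_ker_eq _ _ hab
  obtain ⟨h, hh⟩ := hH.exists_eq_one_iff hκ hι b j hj (i g)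
  have hlift : FreeGroup.lift (fun o => o.elim (i g) (j ∘ b)) =
      i.comp (FreeGroup.lift fun o : Option ι => o.elim g a) := by
    refine FreeGroup.ext_hom _ _ fun o => ?_
    cases o with
    | none => simp
    | some x => simpa using (DFunLike.congr_fun hij (FreeGroup.of x)).symm
  refine ⟨h, ?_⟩
  ext w
  rw [MonoidHom.mem_ker, MonoidHom.mem_ker, hh, hlift, MonoidHom.comp_apply,
    map_eq_one_iff _ hi]

theorem IsPartialIsoRel.exists_insert_right (hκ : ℵ₀ < κ) (hH : IsKappaEC κ H)
    {R : Set (G × H)} (hR : IsPartialIsoRel R) (hRκ : #R < κ) (g : G) :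
    ∃ h : H, IsPartialIsoRel (insert (g, h) R) := by
  obtain ⟨h, hh⟩ := IsPartialIso.exists_option_right hκ hH hRκ hR g
  refine ⟨h, hh.isPartialIsoRel_of_subset_range ?_⟩
  rintro p (rfl | hp)
  · exact ⟨none, rfl⟩
  · exact ⟨some ⟨p, hp⟩, rfl⟩

theorem IsPartialIsoRel.exists_insert_left (hκ : ℵ₀ < κ) (hG : IsKappaEC κ G)
    {R : Set (G × H)} (hR : IsPartialIsoRel R) (hRκ : #R < κ) (h : H) :
    ∃ g : G, IsPartialIsoRel (insert (g, h) R) := by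
  obtain ⟨g, hg⟩ := IsPartialIso.exists_option_right hκ hG hRκ hR.symm h
  refine ⟨g, hg.symm.isPartialIsoRel_of_subset_range ?_⟩
  rintro p (rfl | hp)
  · exact ⟨none, rfl⟩
  · exact ⟨some ⟨p, hp⟩, rfl⟩

end KappaEC

section BackAndForth

noncomputable def greedySeq {ι α : Type*} [Preorder ι] [WellFoundedLT ι]
    (next : Set α → ι → α) : ι → α :=
  IsWellFounded.fix (· < ·) fun i f => next (range fun j : Iio i => f j j.2) i

theorem greedySeq_eq {ι α : Type*} [Preorder ι] [WellFoundedLT ι] (next : Set α → ι → α)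
    (i : ι) : greedySeq next i = next (greedySeq next '' Iio i) i := by
  rw [greedySeq, IsWellFounded.fix_eq, image_eq_range]

theorem image_eq_sUnion_image_Iic {ι α : Type*} [Preorder ι] (s : ι → α) {I : Set ι}
    (hI : IsLowerSet I) : s '' I = ⋃₀ ((fun j => s '' Iic j) '' I) := by
  ext x
  simp only [mem_image, mem_sUnion, exists_exists_and_eq_and, mem_Iic]
  exact ⟨fun ⟨j, hj, hx⟩ => ⟨j, hj, j, le_rfl, hx⟩,
    fun ⟨j, hj, k, hkj, hx⟩ => ⟨k, hI hkj hj, hx⟩⟩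

theorem exists_forall_exists_mem_of_surjective {α T : Type u} {κ : Cardinal.{u}}
    {e : κ.ord.ToType → T} (he : Surjective e) (P : Set α → Prop) (C : T → α → Prop)
    (hchain : ∀ c : Set (Set α), IsChain (· ⊆ ·) c → (∀ R ∈ c, P R) → P (⋃₀ c))
    (next : Set α → T → α)
    (hnext : ∀ R, P R → #R < κ → ∀ t, C t (next R t) ∧ P (insert (next R t) R)) :
    ∃ R, P R ∧ ∀ t, ∃ a ∈ R, C t a := by
  let s := greedySeq fun R i => next R (e i)
  have hs : ∀ i, s i = next (s '' Iio i) (e i) := greedySeq_eq _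
  have hsmall : ∀ i, #(s '' Iio i) < κ := fun i =>
    mk_image_le.trans_lt (by simpa using mk_Iio_lt i)
  have hlower : ∀ I : Set κ.ord.ToType, IsLowerSet I → (∀ j ∈ I, P (s '' Iic j)) →
      P (s '' I) := fun I hI hIic => by
    have hmono : Monotone fun j => s '' Iic j := fun j k hjk => image_mono (Iic_subset_Iic.mpr hjk)
    rw [image_eq_sUnion_image_Iic s hI]
    exact hchain _ (hmono.isChain_range.mono (image_subset_range _ _)) (forall_mem_image.mpr hIic)
  have hIic : ∀ i, P (s '' Iic i) := by
    intro i
    induction i using WellFoundedLT.induction with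
    | _ i ih =>
      rw [← Iio_insert, image_insert_eq, hs]
      exact (hnext _ (hlower _ (isLowerSet_Iio i) ih) (hsmall i) _).2
  refine ⟨range s, ?_, fun t => ?_⟩
  · rw [← image_univ]
    exact hlower univ isLowerSet_univ fun i _ => hIic i
  · obtain ⟨i, rfl⟩ := he t
    refine ⟨s i, mem_range_self i, ?_⟩
    rw [hs]
    exact (hnext _ (hlower _ (isLowerSet_Iio i) fun j _ => hIic j) (hsmall i) _).1

theorem exists_forall_exists_mem_of_extend {α T : Type u} {κ : Cardinal.{u}} (hT : #T ≤ κ)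
    (P : Set α → Prop) (C : T → α → Prop)
    (hchain : ∀ c : Set (Set α), IsChain (· ⊆ ·) c → (∀ R ∈ c, P R) → P (⋃₀ c))
    (hext : ∀ R, P R → #R < κ → ∀ t, ∃ a, C t a ∧ P (insert a R)) :
    ∃ R, P R ∧ ∀ t, ∃ a ∈ R, C t a := by
  have hP₀ : P ∅ := by simpa using hchain ∅ IsChain.empty (by simp)
  rcases isEmpty_or_nonempty T with hT₀ | hT₀
  · exact ⟨∅, hP₀, isEmptyElim⟩
  inhabit T
  have hκ₀ : #(∅ : Set α) < κ := by
    rw [mk_eq_zero]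
    exact (pos_iff_ne_zero.mpr (mk_ne_zero T)).trans_le hT
  have : Nonempty α := ⟨(hext ∅ hP₀ hκ₀ default).choose⟩
  have hnext : ∀ R t, ∃ a, P R → #R < κ → C t a ∧ P (insert a R) := by
    intro R t
    by_cases hR : P R ∧ #R < κ
    · obtain ⟨a, ha⟩ := hext R hR.1 hR.2 t
      exact ⟨a, fun _ _ => ha⟩
    · exact ⟨Classical.arbitrary α, fun h₁ h₂ => (hR ⟨h₁, h₂⟩).elim⟩
  choose next hnext using hnext
  obtain ⟨f⟩ : Nonempty (T ↪ κ.ord.ToType) := by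
    rw [← Cardinal.le_def, mk_ord_toType]
    exact hT
  exact exists_forall_exists_mem_of_surjective (invFun_surjective f.injective) P C hchain next
    fun R hR hRκ t => hnext R t hR hRκ

end BackAndForth

/-- Any two `κ`-existentially closed groups of cardinality `κ` (`κ` uncountable) are
isomorphic. -/
theorem stmt_8 (κ : Cardinal.{u}) (hκ : Cardinal.aleph0 < κ)
    (G H : Type u) [Group G] [Group H] (hG : IsKappaEC κ G) (hH : IsKappaEC κ H)
    (hGcard : Cardinal.mk G = κ) (hHcard : Cardinal.mk H = κ) :
    Nonempty (G ≃* H) := by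
  have hcard : #(G ⊕ H) ≤ κ := by
    rw [mk_sum, lift_id, lift_id, hGcard, hHcard, add_eq_self hκ.le]
  obtain ⟨R, hR, htotal⟩ := exists_forall_exists_mem_of_extend hcard IsPartialIsoRel
    (fun t p => Sum.elim (p.1 = ·) (p.2 = ·) t)
    (fun c hc h => isPartialIsoRel_sUnion hc.directedOn h)
    (by
      rintro R hR hRκ (g | h)
      · obtain ⟨h, hh⟩ := hR.exists_insert_right hκ hH hRκ g
        exact ⟨(g, h), rfl, hh⟩
      · obtain ⟨g, hg⟩ := hR.exists_insert_left hκ hG hRκ h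
        exact ⟨(g, h), rfl, hg⟩)
  refine hR.nonempty_mulEquiv (FreeGroup.lift_surjective_of_surjective fun g => ?_)
    (FreeGroup.lift_surjective_of_surjective fun h => ?_)
  · obtain ⟨p, hp, rfl⟩ := htotal (.inl g)
    exact ⟨⟨p, hp⟩, rfl⟩
  · obtain ⟨p, hp, rfl⟩ := htotal (.inr h)
    exact ⟨⟨p, hp⟩, rfl⟩
end

section
/- Let κ be a regular cardinal and G a κ-existentially closed group of cardinality κ. Then |Aut(G)| = 2^κ. -/
/-!
Conjugation by an element of `G`, restricted to a subgroup with fewer than `κ` generators, is a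
small partial automorphism. Existential closedness gives two facts: every injective homomorphism
from such a subgroup into `G` is a conjugation (it is one in an HNN extension), and every small
set is centralized by an element that does not commute with everything. By the first and the
regularity of `κ`, a chain of fewer than `κ` small partial conjugations has a small common
extension; by the second, each one has two incompatible small extensions, which can moreover be
made to contain any prescribed element in their domain and range. Enumerating `G` in order type
`κ`, this yields a binary tree of height `κ` whose `2 ^ κ` branches glue to pairwise distinct
automorphisms. The upper bound is `|G → G| = κ ^ κ = 2 ^ κ`.
-/

universe u

open Cardinal
open scoped commutatorElement

/-- The restriction of conjugation by `conj` to the subgroup generated by `gens`, a partial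
automorphism of `G`; `p ≤ q` says that `q` extends `p`. -/
structure PartialConj (G : Type u) [Group G] where
  gens : Set G
  conj : G

namespace PartialConj

variable {G : Type u} [Group G]

instance : Inhabited (PartialConj G) := ⟨⟨∅, 1⟩⟩

instance : Preorder (PartialConj G) where
  le p q := p.gens ⊆ q.gens ∧ Set.EqOn (MulAut.conj q.conj) (MulAut.conj p.conj) p.gens
  le_refl _ := ⟨subset_rfl, fun _ _ => rfl⟩
  le_trans _ _ _ hpq hqr := ⟨hpq.1.trans hqr.1, fun _ hx => (hqr.2 (hpq.1 hx)).trans (hpq.2 hx)⟩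

theorem conj_eq_of_le {p q : PartialConj G} (h : p ≤ q) {x : G}
    (hx : x ∈ Subgroup.closure p.gens) : MulAut.conj q.conj x = MulAut.conj p.conj x :=
  MonoidHom.eqOn_closure (f := (MulAut.conj q.conj).toMonoidHom)
    (g := (MulAut.conj p.conj).toMonoidHom) h.2 hx

theorem exists_injective_hom_of_monotone {ι : Type*} [Nonempty ι] [Preorder ι] [IsDirectedOrder ι]
    {p : ι → PartialConj G} (hp : Monotone p) :
    ∃ f : Subgroup.closure (⋃ i, (p i).gens) →* G, Function.Injective f ∧
      ∀ i (x : Subgroup.closure (⋃ i, (p i).gens)),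
        (x : G) ∈ Subgroup.closure (p i).gens → f x = MulAut.conj (p i).conj x := by
  have hdir : Directed (· ≤ ·) fun i => Subgroup.closure (p i).gens :=
    Monotone.directed_le fun i j hij => Subgroup.closure_mono (hp hij).1
  have hmem (x : Subgroup.closure (⋃ i, (p i).gens)) :
      ∃ i, (x : G) ∈ Subgroup.closure (p i).gens := by
    simpa only [Subgroup.closure_iUnion, Subgroup.mem_iSup_of_directed hdir] using x.2
  choose idx hidx using hmem
  have hagree {i j : ι} {x : G} (hi : x ∈ Subgroup.closure (p i).gens)
      (hj : x ∈ Subgroup.closure (p j).gens) :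
      MulAut.conj (p i).conj x = MulAut.conj (p j).conj x := by
    obtain ⟨k, hik, hjk⟩ := directed_of (· ≤ ·) i j
    rw [← conj_eq_of_le (hp hik) hi, conj_eq_of_le (hp hjk) hj]
  have hcommon (x y : Subgroup.closure (⋃ i, (p i).gens)) : ∃ k,
      (x : G) ∈ Subgroup.closure (p k).gens ∧ (y : G) ∈ Subgroup.closure (p k).gens := by
    obtain ⟨k, hxk, hyk⟩ := directed_of (· ≤ ·) (idx x) (idx y)
    exact ⟨k, Subgroup.closure_mono (hp hxk).1 (hidx x), Subgroup.closure_mono (hp hyk).1 (hidx y)⟩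
  have hmul (x y : Subgroup.closure (⋃ i, (p i).gens)) :
      MulAut.conj (p (idx (x * y))).conj ↑(x * y) =
        MulAut.conj (p (idx x)).conj x * MulAut.conj (p (idx y)).conj y := by
    obtain ⟨k, hx, hy⟩ := hcommon x y
    rw [hagree (hidx (x * y)) (mul_mem hx hy), Subgroup.coe_mul, map_mul, hagree (hidx x) hx,
      hagree (hidx y) hy]
  refine ⟨MonoidHom.mk' (fun x => MulAut.conj (p (idx x)).conj x) hmul, fun x y hxy => ?_,
    fun i x hx => hagree (hidx x) hx⟩
  obtain ⟨k, hx, hy⟩ := hcommon x y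
  replace hxy : MulAut.conj (p (idx x)).conj x = MulAut.conj (p (idx y)).conj y := hxy
  rw [hagree (hidx x) hx, hagree (hidx y) hy] at hxy
  exact Subtype.ext ((MulAut.conj _).injective hxy)

theorem exists_mulAut_of_monotone {ι : Type*} [Preorder ι] [IsDirectedOrder ι]
    {p : ι → PartialConj G} (hp : Monotone p) (hdom : ∀ x, ∃ i, x ∈ (p i).gens)
    (hran : ∀ y, ∃ i, (MulAut.conj (p i).conj).symm y ∈ (p i).gens) :
    ∃ φ : MulAut G, ∀ i, ∀ x ∈ (p i).gens, φ x = MulAut.conj (p i).conj x := by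
  have : Nonempty ι := ⟨(hdom 1).choose⟩
  obtain ⟨f, hf, hfp⟩ := exists_injective_hom_of_monotone hp
  have hgen {i : ι} {x : G} (hx : x ∈ (p i).gens) :
      x ∈ Subgroup.closure (⋃ i, (p i).gens) :=
    Subgroup.subset_closure (Set.mem_iUnion_of_mem i hx)
  let φ : G →* G := f.comp ((MonoidHom.id G).codRestrict _ fun x => hgen (hdom x).choose_spec)
  have hφ {i : ι} {x : G} (hx : x ∈ (p i).gens) : φ x = MulAut.conj (p i).conj x :=
    hfp i ⟨x, hgen hx⟩ (Subgroup.subset_closure hx)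
  have hsurj : Function.Surjective φ := fun y => by
    obtain ⟨i, hi⟩ := hran y
    exact ⟨_, (hφ hi).trans (MulEquiv.apply_symm_apply _ y)⟩
  refine ⟨MulEquiv.ofBijective φ ⟨fun x y hxy => ?_, hsurj⟩, fun i x hx => hφ hx⟩
  simpa using hf hxy

structure IsFork (κ : Cardinal.{u}) (p : PartialConj G) (y : G)
    (q : Bool → PartialConj G) : Prop where
  small (b : Bool) : #(q b).gens < κ
  le (b : Bool) : p ≤ q b
  mem_gens (b : Bool) : y ∈ (q b).gens
  symm_mem_gens (b : Bool) : (MulAut.conj (q b).conj).symm y ∈ (q b).gens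
  exists_ne : ∃ x ∈ (q false).gens ∩ (q true).gens,
    MulAut.conj (q false).conj x ≠ MulAut.conj (q true).conj x

variable (κ : Cardinal.{u})

noncomputable def fork (p : PartialConj G) (y : G) : Bool → PartialConj G :=
  Classical.epsilon (IsFork κ p y)

noncomputable def upperBound {ι : Type u} (p : ι → PartialConj G) : PartialConj G :=
  Classical.epsilon fun q => #q.gens < κ ∧ ∀ i, p i ≤ q

end PartialConj

namespace IsKappaEC

variable {κ : Cardinal.{u}} {G : Type u} [Group G]

open PartialConj

theorem exists_mem_centralizer_not_commute (hG : IsKappaEC κ G) (hκ : 1 < κ) {S : Set G}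
    (hS : #S < κ) : ∃ c ∈ Subgroup.centralizer S, ∃ x : G, ¬Commute c x := by
  let c : FreeGroup (G ⊕ ULift.{u} Bool) := .of (.inr ⟨false⟩)
  let x : FreeGroup (G ⊕ ULift.{u} Bool) := .of (.inr ⟨true⟩)
  have hsys := hG (ULift.{u} Bool) ((fun s => ⁅c, .of (.inl s)⁆) '' S) {⁅c, x⁆}
    (mk_image_le.trans_lt hS) (by rwa [mk_singleton])
  obtain ⟨v, hcomm, hne⟩ := hsys <| by
    -- in `G × S₃`, let `c` and `x` be two non-commuting transpositions
    refine ⟨G × Equiv.Perm (Fin 3), inferInstance, .inl _ _, fun _ _ h => congrArg Prod.fst h,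
      fun b => (1, if b.down then Equiv.swap 1 2 else Equiv.swap 0 1), ?_, ?_⟩
    · rintro _ ⟨s, -, rfl⟩
      simp [c, map_commutatorElement, commutatorElement_eq_one_iff_commute, Commute, SemiconjBy]
    · rintro _ rfl h
      have hS₃ : ⁅Equiv.swap (0 : Fin 3) 1, Equiv.swap (1 : Fin 3) 2⁆ ≠ 1 := by decide
      simp only [c, x, map_commutatorElement, FreeGroup.lift_apply_of, Sum.elim_inr] at h
      exact hS₃ (by simpa [map_commutatorElement] using congrArg (MonoidHom.snd _ _) h)
  refine ⟨v ⟨false⟩, Subgroup.mem_centralizer_iff.2 fun s hs => ?_, v ⟨true⟩, fun h => ?_⟩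
  · have := hcomm _ ⟨s, hs, rfl⟩
    simp only [c, map_commutatorElement, FreeGroup.lift_apply_of, Sum.elim_inl, Sum.elim_inr,
      id_eq, commutatorElement_eq_one_iff_commute] at this
    exact this.eq.symm
  · refine hne _ rfl ?_
    simpa [c, x, map_commutatorElement, commutatorElement_eq_one_iff_commute] using h

theorem exists_conj_eq_of_injective (hG : IsKappaEC κ G) {T : Set G} (hT : #T < κ)
    {f : Subgroup.closure T →* G} (hf : Function.Injective f) :
    ∃ g : G, ∀ k, f k = MulAut.conj g k := by
  let t : FreeGroup (G ⊕ PUnit) := .of (.inr ⟨⟩)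
  let word (τ : T) : FreeGroup (G ⊕ PUnit) :=
    t * .of (.inl τ) * t⁻¹ * (.of (.inl (f ⟨τ, Subgroup.subset_closure τ.2⟩)))⁻¹
  have hsys := hG PUnit (Set.range word) ∅ (mk_range_le.trans_lt hT) (by simpa using pos_of_gt hT)
  obtain ⟨v, hv, -⟩ := hsys <| by
    -- the HNN extension of `G` whose stable letter conjugates `k` to `f k`
    refine ⟨HNNExtension G (Subgroup.closure T) f.range (MonoidHom.ofInjective hf), inferInstance,
      HNNExtension.of, HNNExtension.of_injective _, fun _ => HNNExtension.t, ?_, by simp⟩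
    rintro _ ⟨τ, rfl⟩
    simp only [word, t, map_mul, map_inv, FreeGroup.lift_apply_of, Sum.elim_inl, Sum.elim_inr,
      mul_inv_eq_one]
    simpa [MonoidHom.ofInjective_apply] using (HNNExtension.equiv_eq_conj
      (φ := MonoidHom.ofInjective hf) ⟨τ, Subgroup.subset_closure τ.2⟩).symm
  refine ⟨v ⟨⟩, DFunLike.congr_fun (MonoidHom.eq_of_eqOn_dense Subgroup.closure_closure_coe_preimage
    (g := (MulAut.conj (v ⟨⟩)).toMonoidHom.comp (Subgroup.closure T).subtype) fun τ hτ => ?_)⟩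
  have := hv _ ⟨⟨τ, hτ⟩, rfl⟩
  simp only [word, t, map_mul, map_inv, FreeGroup.lift_apply_of, Sum.elim_inl, Sum.elim_inr,
    id_eq, mul_inv_eq_one] at this
  simp [this]

theorem exists_small_forall_le (hG : IsKappaEC κ G) (hκ : κ.IsRegular) {ι : Type u} [Preorder ι]
    [IsDirectedOrder ι] (hι : #ι < κ) {p : ι → PartialConj G} (hp : Monotone p)
    (hsmall : ∀ i, #(p i).gens < κ) : ∃ q : PartialConj G, #q.gens < κ ∧ ∀ i, p i ≤ q := by
  rcases isEmpty_or_nonempty ι with _ | _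
  · exact ⟨default, by simpa [default] using hκ.pos, isEmptyElim⟩
  obtain ⟨f, hf, hfp⟩ := exists_injective_hom_of_monotone hp
  have hU : #(⋃ i, (p i).gens) < κ := (card_iUnion_lt_iff_forall_of_isRegular hκ hι).2 hsmall
  obtain ⟨g, hg⟩ := hG.exists_conj_eq_of_injective hU hf
  refine ⟨⟨⋃ i, (p i).gens, g⟩, hU, fun i =>
    ⟨Set.subset_iUnion (fun i => (p i).gens) i, fun x hx => ?_⟩⟩
  have hxU : x ∈ Subgroup.closure (⋃ i, (p i).gens) :=
    Subgroup.subset_closure (Set.mem_iUnion_of_mem i hx)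
  exact (hg ⟨x, hxU⟩).symm.trans (hfp i ⟨x, hxU⟩ (Subgroup.subset_closure hx))

theorem exists_isFork (hG : IsKappaEC κ G) (hκ : ℵ₀ ≤ κ) {p : PartialConj G}
    (hp : #p.gens < κ) (y : G) : ∃ q, IsFork κ p y q := by
  set S := p.gens ∪ {y, (MulAut.conj p.conj).symm y}
  have hfin {s t : Set G} (hs : #s < κ) (ht : t.Finite) : #(s ∪ t : Set G) < κ :=
    (mk_union_le s t).trans_lt (add_lt_of_lt hκ hs (ht.lt_aleph0.trans_le hκ))
  obtain ⟨c, hc, x, hcx⟩ := hG.exists_mem_centralizer_not_commute (S := S)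
    (one_lt_aleph0.trans_le hκ) (hfin hp (Set.toFinite _))
  -- `c` centralizes `S`, so twisting by it changes nothing on `S` but moves `x`
  let q (b : Bool) : PartialConj G := ⟨S ∪ {c, x}, p.conj * if b then c else 1⟩
  have hfix (b : Bool) : Set.EqOn (MulAut.conj (q b).conj) (MulAut.conj p.conj) S := fun w hw => by
    have hcw : c * w * c⁻¹ = w := by
      rw [(Subgroup.mem_centralizer_iff.1 hc w hw).symm, mul_inv_cancel_right]
    cases b <;> simp [q, mul_assoc, hcw]
  have hsymm (b : Bool) : (MulAut.conj (q b).conj).symm y = (MulAut.conj p.conj).symm y := by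
    rw [MulEquiv.symm_apply_eq, hfix b (by simp [S]), MulEquiv.apply_symm_apply]
  refine ⟨q, fun b => hfin (hfin hp (Set.toFinite _)) (Set.toFinite _), fun b => ⟨?_, ?_⟩,
    fun b => by simp [q, S], fun b => by rw [hsymm]; simp [q, S], ⟨x, by simp [q], ?_⟩⟩
  · exact Set.subset_union_left.trans Set.subset_union_left
  · exact (hfix b).mono Set.subset_union_left
  · intro h
    simp only [q, Bool.false_eq_true, ↓reduceIte, mul_one, map_mul, MulAut.mul_apply] at h
    have h' : c * x * c⁻¹ = x := ((MulAut.conj _).injective h).symm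
    exact hcx (mul_inv_eq_iff_eq_mul.1 h')

theorem isFork_fork (hG : IsKappaEC κ G) (hκ : ℵ₀ ≤ κ) {p : PartialConj G} (hp : #p.gens < κ)
    (y : G) : IsFork κ p y (fork κ p y) :=
  Classical.epsilon_spec (hG.exists_isFork hκ hp y)

theorem upperBound_spec (hG : IsKappaEC κ G) (hκ : κ.IsRegular) {ι : Type u} [Preorder ι]
    [IsDirectedOrder ι] (hι : #ι < κ) {p : ι → PartialConj G} (hp : Monotone p)
    (hsmall : ∀ i, #(p i).gens < κ) : #(upperBound κ p).gens < κ ∧ ∀ i, p i ≤ upperBound κ p :=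
  Classical.epsilon_spec (hG.exists_small_forall_le hκ hι hp hsmall)

end IsKappaEC

namespace PartialConj

variable {κ : Cardinal.{u}} {G : Type u} [Group G] {ι : Type u} [LinearOrder ι] [WellFoundedLT ι]

variable (κ) in
/-- The branch `ε` of a binary tree of height `ι`: the node at level `α` first extends all
earlier nodes, then forks in direction `ε α` while absorbing `e α`. -/
noncomputable def branch (e : ι → G) (ε : ι → Bool) : ι → PartialConj G :=
  wellFounded_lt.fix fun α branch =>
    fork κ (upperBound κ fun β : Set.Iio α => branch β β.2) (e α) (ε α)

variable (κ) in
noncomputable def stem (e : ι → G) (ε : ι → Bool) (α : ι) : PartialConj G :=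
  upperBound κ fun β : Set.Iio α => branch κ e ε β

theorem branch_eq (e : ι → G) (ε : ι → Bool) (α : ι) :
    branch κ e ε α = fork κ (stem κ e ε α) (e α) (ε α) :=
  wellFounded_lt.fix_eq _ _

theorem stem_congr {e : ι → G} {ε ε' : ι → Bool} {α : ι} (h : Set.EqOn ε ε' (Set.Iio α)) :
    stem κ e ε α = stem κ e ε' α := by
  induction α using WellFoundedLT.induction with
  | _ α ih =>
    unfold stem
    congr 1
    funext β
    rw [branch_eq, branch_eq, ih β β.2 (h.mono (Set.Iio_subset_Iio β.2.le)), h β.2]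

theorem stem_spec (hG : IsKappaEC κ G) (hκ : κ.IsRegular) (hι : ∀ α : ι, #(Set.Iio α) < κ)
    (e : ι → G) (ε : ι → Bool) (α : ι) :
    #(stem κ e ε α).gens < κ ∧ ∀ β < α, branch κ e ε β ≤ stem κ e ε α := by
  induction α using WellFoundedLT.induction with
  | _ α ih =>
    have hfork (β : Set.Iio α) := hG.isFork_fork hκ.aleph0_le (ih β β.2).1 (e β)
    have hmono : Monotone fun β : Set.Iio α => branch κ e ε β := fun β γ hβγ => by
      rcases hβγ.lt_or_eq with h | rfl
      · show branch κ e ε β ≤ branch κ e ε γ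
        rw [branch_eq e ε γ]
        exact ((ih γ γ.2).2 β h).trans ((hfork γ).le _)
      · rfl
    obtain ⟨hsmall, hle⟩ := hG.upperBound_spec hκ (hι α) hmono fun β => by
      rw [branch_eq]
      exact (hfork β).small _
    exact ⟨hsmall, fun β hβ => hle ⟨β, hβ⟩⟩

theorem isFork_branch (hG : IsKappaEC κ G) (hκ : κ.IsRegular) (hι : ∀ α : ι, #(Set.Iio α) < κ)
    (e : ι → G) (ε : ι → Bool) (α : ι) :
    IsFork κ (stem κ e ε α) (e α) (fork κ (stem κ e ε α) (e α)) :=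
  hG.isFork_fork hκ.aleph0_le (stem_spec hG hκ hι e ε α).1 (e α)

theorem monotone_branch (hG : IsKappaEC κ G) (hκ : κ.IsRegular)
    (hι : ∀ α : ι, #(Set.Iio α) < κ) (e : ι → G) (ε : ι → Bool) : Monotone (branch κ e ε) := by
  intro β α hβα
  rcases hβα.lt_or_eq with h | rfl
  · rw [branch_eq e ε α]
    exact ((stem_spec hG hκ hι e ε α).2 β h).trans ((isFork_branch hG hκ hι e ε α).le _)
  · rfl

theorem exists_conj_ne_of_ne (hG : IsKappaEC κ G) (hκ : κ.IsRegular)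
    (hι : ∀ α : ι, #(Set.Iio α) < κ) (e : ι → G) {ε ε' : ι → Bool} (hne : ε ≠ ε') :
    ∃ α, ∃ x ∈ (branch κ e ε α).gens ∩ (branch κ e ε' α).gens,
      MulAut.conj (branch κ e ε α).conj x ≠ MulAut.conj (branch κ e ε' α).conj x := by
  obtain ⟨α, hα, hmin⟩ := wellFounded_lt.has_min {α | ε α ≠ ε' α} (Function.ne_iff.1 hne)
  have hstem : stem κ e ε α = stem κ e ε' α :=
    stem_congr fun β hβ => not_not.1 fun h => hmin β h hβ
  obtain ⟨x, hx, hxne⟩ := (isFork_branch hG hκ hι e ε α).exists_ne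
  refine ⟨α, x, ?_⟩
  rw [branch_eq, branch_eq, ← hstem]
  cases h : ε α <;> cases h' : ε' α
  · exact absurd (h.trans h'.symm) hα
  · exact ⟨hx, hxne⟩
  · exact ⟨⟨hx.2, hx.1⟩, hxne.symm⟩
  · exact absurd (h.trans h'.symm) hα

theorem exists_injective_mulAut (hG : IsKappaEC κ G) (hκ : κ.IsRegular)
    (hι : ∀ α : ι, #(Set.Iio α) < κ) {e : ι → G} (he : Function.Surjective e) :
    ∃ Φ : (ι → Bool) → MulAut G, Function.Injective Φ := by
  have hglue (ε : ι → Bool) := exists_mulAut_of_monotone (monotone_branch hG hκ hι e ε)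
    (fun x => by
      obtain ⟨α, rfl⟩ := he x
      exact ⟨α, by rw [branch_eq]; exact (isFork_branch hG hκ hι e ε α).mem_gens _⟩)
    (fun y => by
      obtain ⟨α, rfl⟩ := he y
      exact ⟨α, by rw [branch_eq]; exact (isFork_branch hG hκ hι e ε α).symm_mem_gens _⟩)
  choose Φ hΦ using hglue
  refine ⟨Φ, fun ε ε' h => by_contra fun hne => ?_⟩
  obtain ⟨α, x, hx, hxne⟩ := exists_conj_ne_of_ne hG hκ hι e hne
  exact hxne (by rw [← hΦ ε α x hx.1, ← hΦ ε' α x hx.2, h])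

end PartialConj

/-- If `κ` is a regular cardinal and `G` is a `κ`-existentially closed group of
cardinality `κ`, then `|Aut(G)| = 2 ^ κ`. -/
theorem stmt_10 (κ : Cardinal.{u}) (hκ : κ.IsRegular)
    (G : Type u) [Group G] (hG : IsKappaEC κ G) (hcard : Cardinal.mk G = κ) :
    Cardinal.mk (MulAut G) = 2 ^ κ := by
  obtain ⟨e⟩ : Nonempty (κ.ord.ToType ≃ G) := Cardinal.eq.1 (by rw [mk_ord_toType, hcard])
  obtain ⟨Φ, hΦ⟩ := PartialConj.exists_injective_mulAut hG hκ (fun α => by simpa using mk_Iio_lt α)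
    e.surjective
  refine le_antisymm ?_ ?_
  · calc #(MulAut G) ≤ #(G → G) := mk_le_of_injective DFunLike.coe_injective
      _ = 2 ^ κ := by rw [← power_def, hcard, power_self_eq hκ.aleph0_le]
  · calc 2 ^ κ = #(κ.ord.ToType → Bool) := by simp
      _ ≤ #(MulAut G) := mk_le_of_injective hΦ
end

section
/- Let λ ≤ κ be uncountable cardinals with λ^{<λ} = λ, let H be a κ-existentially closed group, and let K ≤ H be a subgroup of cardinality λ. Then there exists a λ-existentially closed subgroup K̄ of H with K ≤ K̄ ≤ H and |K̄| = λ. -/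
universe u

/-!
The subgroup `K̄` is the union of a chain `(K_i)_{i < λ}` of subgroups of `H` of cardinality `λ`,
where `K_i` adjoins to `K` and the earlier stages a solution in `H` of every system of fewer than
`λ` equations and inequations over them that is solvable in `H`; since `λ^{<λ} = λ` there are only
`λ` such systems at each stage. Now let a system over `K̄` of size `< λ` be solvable in some
overgroup `P` of `K̄`. Amalgamating `H` and `P` over `K̄` makes it solvable in an overgroup of `H`,
hence in `H`, which is `κ`-existentially closed. As `λ^{<λ} = λ` forces `λ` to be regular, its
fewer than `λ` coefficients all lie in an initial segment of the chain, so the next stage, and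
hence `K̄`, contains a solution.
-/

open Cardinal Subgroup

namespace FreeGroup

variable {α β M : Type*} [Group M]

theorem lift_map_apply (f : α → β) (g : β → M) (w : FreeGroup α) :
    lift g (map f w) = lift (g ∘ f) w := by
  induction w using FreeGroup.induction_on <;> simp_all

theorem _root_.MonoidHom.map_freeGroupLift {N : Type*} [Group N] (φ : M →* N) (f : α → M)
    (w : FreeGroup α) : φ (lift f w) = lift (φ ∘ f) w := by
  induction w using FreeGroup.induction_on <;> simp_all

theorem exists_finite_mem_closure (w : FreeGroup α) :
    ∃ s : Set α, s.Finite ∧ w ∈ closure (of '' s) := by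
  have hw : w ∈ closure (Set.range (of (α := α))) := by simp [closure_range_of]
  induction hw using closure_induction with
  | mem _ ha =>
    obtain ⟨a, rfl⟩ := ha
    exact ⟨{a}, Set.finite_singleton a, subset_closure (by simp)⟩
  | one => exact ⟨∅, Set.finite_empty, one_mem _⟩
  | mul _ _ _ _ hx hy =>
    obtain ⟨s, hs, hx⟩ := hx
    obtain ⟨t, ht, hy⟩ := hy
    exact ⟨s ∪ t, hs.union ht, mul_mem (closure_mono (Set.image_mono Set.subset_union_left) hx)
      (closure_mono (Set.image_mono Set.subset_union_right) hy)⟩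
  | inv _ _ hx =>
    obtain ⟨s, hs, hx⟩ := hx
    exact ⟨s, hs, inv_mem hx⟩

end FreeGroup

theorem Cardinal.mk_iUnion_lt_of_finite {α ι : Type u} {c : Cardinal.{u}} (hc : ℵ₀ < c)
    (hι : #ι < c) {f : ι → Set α} (hf : ∀ i, (f i).Finite) : #(⋃ i, f i) < c :=
  calc #(⋃ i, f i) ≤ #ι * ⨆ i, #(f i) := mk_iUnion_le f
    _ ≤ #ι * ℵ₀ := by gcongr; exact ciSup_le' fun i => (hf i).lt_aleph0.le
    _ < c := mul_lt_of_lt hc.le hι hc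

theorem FreeGroup.exists_mk_lt_forall_mem_closure {α : Type u} {c : Cardinal.{u}} (hc : ℵ₀ < c)
    {S : Set (FreeGroup α)} (hS : #S < c) :
    ∃ s : Set α, #s < c ∧ ∀ w ∈ S, w ∈ closure (of '' s) := by
  choose s hs hws using fun w : S => exists_finite_mem_closure w.1
  exact ⟨⋃ w, s w, mk_iUnion_lt_of_finite hc hS hs, fun w hw =>
    closure_mono (Set.image_mono (Set.subset_iUnion s ⟨w, hw⟩)) (hws ⟨w, hw⟩)⟩

namespace Subgroup

variable {G : Type u} [Group G] {c : Cardinal.{u}}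

theorem mk_closure_le (hc : ℵ₀ ≤ c) {s : Set G} (hs : #s ≤ c) : #(closure s) ≤ c := by
  rcases s.eq_empty_or_nonempty with rfl | hne
  · rw [closure_empty]
    exact (mk_le_aleph0).trans hc
  · have : Nonempty s := hne.to_subtype
    rw [FreeGroup.closure_eq_range]
    refine (mk_le_of_surjective (FreeGroup.lift ((↑) : s → G)).rangeRestrict_surjective).trans ?_
    rw [mk_freeGroup]
    exact max_le hs hc

theorem mk_sup_le (hc : ℵ₀ ≤ c) {A B : Subgroup G} (hA : #A ≤ c) (hB : #B ≤ c) :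
    #(A ⊔ B : Subgroup G) ≤ c := by
  rw [sup_eq_closure]
  refine mk_closure_le hc ((mk_union_le _ _).trans ?_)
  exact (add_le_add hA hB).trans (add_eq_self hc).le

theorem mk_iSup_le (hc : ℵ₀ ≤ c) {ι : Type u} (hι : #ι ≤ c) {A : ι → Subgroup G}
    (hA : ∀ i, #(A i) ≤ c) : #(⨆ i, A i : Subgroup G) ≤ c := by
  rw [iSup_eq_closure]
  refine mk_closure_le hc ((mk_iUnion_le _).trans ?_)
  exact (mul_le_mul' hι (ciSup_le' hA)).trans (mul_eq_self hc).le

end Subgroup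

theorem Group.exists_amalgam {C A B : Type u} [Group C] [Group A] [Group B] {f : C →* A}
    {g : C →* B} (hf : Function.Injective f) (hg : Function.Injective g) :
    ∃ (P : Type u) (_ : Group P) (iA : A →* P) (iB : B →* P),
      Function.Injective iA ∧ Function.Injective iB ∧ iA.comp f = iB.comp g := by
  let G : Bool → Type u := fun b => cond b A B
  let _ : ∀ b, Group (G b) := fun b => match b with
    | true => ‹Group A›
    | false => ‹Group B›
  let φ : ∀ b, C →* G b := fun b => match b with
    | true => f
    | false => g
  have hφ : ∀ b, Function.Injective (φ b) := fun b => match b with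
    | true => hf
    | false => hg
  open Monoid.PushoutI in
  exact ⟨Monoid.PushoutI φ, inferInstance, of (φ := φ) true, of (φ := φ) false,
    of_injective hφ true, of_injective hφ false, MonoidHom.ext fun x =>
      (of_apply_eq_base φ true x).trans (of_apply_eq_base φ false x).symm⟩

section Systems

variable {A B X Y M N : Type*} [Group M] [Group N]

def Solves (c : A → M) (v : X → M) (eqs ineqs : Set (FreeGroup (A ⊕ X))) : Prop :=
  (∀ w ∈ eqs, FreeGroup.lift (Sum.elim c v) w = 1) ∧
    ∀ w ∈ ineqs, FreeGroup.lift (Sum.elim c v) w ≠ 1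

def SolvableOver (G : Type u) [Group G] {X : Type u} (eqs ineqs : Set (FreeGroup (G ⊕ X))) :
    Prop :=
  ∃ (M : Type u) (_ : Group M) (i : G →* M), Function.Injective i ∧ ∃ v : X → M,
    Solves i v eqs ineqs

theorem solves_comp_iff {φ : M →* N} (hφ : Function.Injective φ) {c : A → M} {v : X → M}
    {eqs ineqs : Set (FreeGroup (A ⊕ X))} :
    Solves (φ ∘ c) (φ ∘ v) eqs ineqs ↔ Solves c v eqs ineqs := by
  simp only [Solves, ← Sum.comp_elim, ← MonoidHom.map_freeGroupLift, ne_eq, map_eq_one_iff _ hφ]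

theorem solves_image_map_iff (f : A → B) (e : X → Y) {c : B → M} {v : Y → M}
    {eqs ineqs : Set (FreeGroup (A ⊕ X))} :
    Solves c v (FreeGroup.map (Sum.map f e) '' eqs) (FreeGroup.map (Sum.map f e) '' ineqs) ↔
      Solves (c ∘ f) (v ∘ e) eqs ineqs := by
  simp only [Solves, Set.forall_mem_image, FreeGroup.lift_map_apply, Sum.elim_comp_map]

theorem Solves.congr {c c' : A → M} {v v' : X → M} {eqs ineqs : Set (FreeGroup (A ⊕ X))}
    {s : Set (A ⊕ X)} (hs : ∀ w ∈ eqs ∪ ineqs, w ∈ Subgroup.closure (FreeGroup.of '' s))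
    (heq : Set.EqOn (Sum.elim c v) (Sum.elim c' v') s) (h : Solves c v eqs ineqs) :
    Solves c' v' eqs ineqs := by
  have hlift : ∀ w ∈ eqs ∪ ineqs, FreeGroup.lift (Sum.elim c v) w =
      FreeGroup.lift (Sum.elim c' v') w := fun w hw =>
    MonoidHom.eqOn_closure (by rintro _ ⟨a, ha, rfl⟩; simpa using heq ha) (hs w hw)
  exact ⟨fun w hw => hlift w (.inl hw) ▸ h.1 w hw, fun w hw => hlift w (.inr hw) ▸ h.2 w hw⟩

end Systems

theorem IsKappaEC.exists_solves {κ : Cardinal.{u}} {G H X : Type u} [Group G] [Group H]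
    (hH : IsKappaEC κ H) {j : G →* H} (hj : Function.Injective j)
    {eqs ineqs : Set (FreeGroup (G ⊕ X))} (h₁ : #eqs < κ) (h₂ : #ineqs < κ)
    (hs : SolvableOver G eqs ineqs) : ∃ v : X → H, Solves j v eqs ineqs := by
  obtain ⟨M, _, i, hi, v, hv⟩ := hs
  obtain ⟨P, _, iH, iM, hiH, hiM, hcomm⟩ := Group.exists_amalgam hj hi
  have hP : Solves iH (iM ∘ v) (FreeGroup.map (Sum.map j id) '' eqs)
      (FreeGroup.map (Sum.map j id) '' ineqs) := by
    rw [solves_image_map_iff, ← MonoidHom.coe_comp, hcomm, MonoidHom.coe_comp]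
    exact (solves_comp_iff hiM).2 hv
  obtain ⟨v', hv'⟩ := hH X _ _ (mk_image_le.trans_lt h₁) (mk_image_le.trans_lt h₂)
    ⟨P, inferInstance, iH, hiH, iM ∘ v, hP⟩
  exact ⟨v', (solves_image_map_iff j id).1 hv'⟩

theorem isKappaEC_of_forall_solvableOver {κ : Cardinal.{u}} (hκ : ℵ₀ < κ) {G Y : Type u}
    [Group G] (hY : κ ≤ #Y)
    (h : ∀ eqs ineqs : Set (FreeGroup (G ⊕ Y)), #eqs < κ → #ineqs < κ →
      SolvableOver G eqs ineqs → ∃ v, Solves id v eqs ineqs) :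
    IsKappaEC κ G := by
  intro X eqs ineqs h₁ h₂ ⟨M, _, i, hi, v, hv⟩
  obtain ⟨s, hs, hS⟩ := FreeGroup.exists_mk_lt_forall_mem_closure hκ (S := eqs ∪ ineqs)
    ((mk_union_le _ _).trans_lt (add_lt_of_lt hκ.le h₁ h₂))
  -- only the fewer than `κ` variables in `V` occur in the system, and they embed into `Y`
  let V : Set X := Sum.inr ⁻¹' s
  obtain ⟨e⟩ : Nonempty (V ↪ Y) :=
    ((mk_preimage_of_injective _ _ Sum.inr_injective).trans_lt (hs.trans_le hY)).le
  have : Nonempty Y := mk_ne_zero_iff.1 (hκ.trans_le hY).ne_bot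
  let f : X → Y := Function.extend (↑) e (fun _ => Classical.arbitrary Y)
  let u : Y → M := Function.extend e (v ∘ (↑)) 1
  have huf : Set.EqOn (Sum.elim i v) (Sum.elim (i ∘ id) (u ∘ f)) s := by
    rintro (a | x) hx
    · rfl
    · have : f x = e ⟨x, hx⟩ := Subtype.val_injective.extend_apply _ _ (⟨x, hx⟩ : V)
      simp [this, u, e.injective.extend_apply]
  obtain ⟨v₀, hv₀⟩ := h _ _ (mk_image_le.trans_lt h₁) (mk_image_le.trans_lt h₂)
    ⟨M, inferInstance, i, hi, u, (solves_image_map_iff id f).2 (Solves.congr hS huf hv)⟩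
  exact ⟨v₀ ∘ f, (solves_image_map_iff id f).1 hv₀⟩

namespace Cardinal

theorem isRegular_of_powerlt_eq_self {c : Cardinal.{u}} (hc : ℵ₀ ≤ c) (h : c ^< c = c) :
    IsRegular c := by
  refine ⟨hc, not_lt.1 fun hcof => ?_⟩
  have := (lt_power_cof_ord hc).trans_le (le_powerlt c hcof)
  exact this.ne h.symm

theorem mk_setOf_mk_lt_le {α : Type u} {c : Cardinal.{u}} (hc : ℵ₀ ≤ c) (h : c ^< c = c)
    (hα : #α ≤ c) : #{s : Set α // #s < c} ≤ c := by
  let card : c.ord.ToType → Cardinal := fun i => (Ordinal.ToType.mk.symm i).1.card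
  let F : (Σ i, {s : Set α // #s ≤ card i}) → {s : Set α // #s < c} := fun p =>
    ⟨p.2.1, p.2.2.trans_lt (lt_ord.1 (Ordinal.ToType.mk.symm p.1).2)⟩
  have hF : Function.Surjective F := by
    rintro ⟨s, hs⟩
    exact ⟨⟨Ordinal.ToType.mk ⟨(#s).ord, ord_lt_ord.2 hs⟩, s, by simp [card]⟩, rfl⟩
  calc #{s : Set α // #s < c} ≤ #(Σ i, {s : Set α // #s ≤ card i}) := mk_le_of_surjective hF
    _ ≤ sum fun _ : c.ord.ToType => c := by
      rw [mk_sigma]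
      refine sum_le_sum _ _ fun i => (mk_bounded_set_le α _).trans ?_
      calc max #α ℵ₀ ^ card i ≤ c ^ card i := power_le_power_right (max_le hα hc)
        _ ≤ c ^< c := le_powerlt c (lt_ord.1 (Ordinal.ToType.mk.symm i).2)
        _ = c := h
    _ = c := by rw [sum_const', mk_toType, card_ord, mul_eq_self hc]

end Cardinal

namespace Subgroup

section TransfiniteChain

variable {G I : Type u} [Group G] [LinearOrder I] [WellFoundedLT I]
  (step : Subgroup G → Subgroup G) (K : Subgroup G)

noncomputable def transfiniteChain : I → Subgroup G :=
  WellFoundedLT.fix fun i chain => step (K ⊔ ⨆ j : Set.Iio i, chain j j.2)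

theorem transfiniteChain_eq (i : I) :
    transfiniteChain step K i = step (K ⊔ ⨆ j : Set.Iio i, transfiniteChain step K (j : I)) :=
  WellFoundedLT.fix_eq _ i

variable {step}

theorem le_transfiniteChain (hstep : ∀ H, H ≤ step H) (i : I) :
    K ≤ transfiniteChain step K i := by
  rw [transfiniteChain_eq]
  exact le_sup_left.trans (hstep _)

theorem transfiniteChain_mono (hstep : ∀ H, H ≤ step H) :
    Monotone (transfiniteChain step K : I → Subgroup G) := by
  intro i j hij
  rcases hij.eq_or_lt with rfl | hlt
  · rfl
  · rw [transfiniteChain_eq step K j]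
    exact (le_iSup (fun k : Set.Iio j => transfiniteChain step K (k : I)) ⟨i, hlt⟩).trans
      (le_sup_right.trans (hstep _))

theorem mk_transfiniteChain_le {c : Cardinal.{u}} (hc : ℵ₀ ≤ c) (hI : #I ≤ c)
    (hmk : ∀ H : Subgroup G, #H ≤ c → #(step H) ≤ c) (hK : #K ≤ c) (i : I) :
    #(transfiniteChain step K i) ≤ c := by
  induction i using WellFoundedLT.induction with
  | ind i ih =>
    rw [transfiniteChain_eq]
    exact hmk _ (mk_sup_le hc hK
      (mk_iSup_le hc ((mk_set_le _).trans hI) fun j => ih j j.2))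

end TransfiniteChain

variable {G : Type u} [Group G]

def StepClosed (c : Cardinal.{u}) (step : Subgroup G → Subgroup G) (L : Subgroup G) : Prop :=
  ∀ s : Set G, s ⊆ L → #s < c → ∃ H : Subgroup G, s ⊆ H ∧ step H ≤ L

theorem exists_stepClosed {c : Cardinal.{u}} (hc : c.IsRegular) {step : Subgroup G → Subgroup G}
    (hstep : ∀ H, H ≤ step H) (hmk : ∀ H : Subgroup G, #H ≤ c → #(step H) ≤ c)
    {K : Subgroup G} (hK : #K ≤ c) : ∃ L, K ≤ L ∧ #L ≤ c ∧ StepClosed c step L := by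
  have hI : #c.ord.ToType = c := by rw [mk_toType, card_ord]
  have : Nonempty c.ord.ToType := mk_ne_zero_iff.1 (hI.symm ▸ hc.ne_zero)
  let F : c.ord.ToType → Subgroup G := transfiniteChain step K
  have hdir : Directed (· ≤ ·) F := (transfiniteChain_mono K hstep).directed_le
  refine ⟨⨆ i, F i, (le_transfiniteChain K hstep (Classical.arbitrary _)).trans (le_iSup F _),
    mk_iSup_le hc.aleph0_le hI.le (mk_transfiniteChain_le K hc.aleph0_le hI.le hmk hK),
    fun s hs hsc => ?_⟩
  choose idx hidx using fun x : s => (mem_iSup_of_directed hdir).1 (hs x.2)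
  -- by regularity, fewer than `c` stages are bounded
  obtain ⟨b, hb⟩ : ∃ b, ∀ i ∈ Set.range idx, i < b := by
    refine not_isCofinal_iff.1 fun hcof => (Order.cof_le hcof).not_gt ?_
    rw [Ordinal.cof_toType, hc.cof_ord]
    exact mk_range_le.trans_lt hsc
  refine ⟨K ⊔ ⨆ j : Set.Iio b, F j, fun x hx => ?_, ?_⟩
  · exact mem_sup_right (mem_iSup_of_mem (⟨idx ⟨x, hx⟩, hb _ ⟨_, rfl⟩⟩ : Set.Iio b)
      (hidx ⟨x, hx⟩))
  · exact (transfiniteChain_eq step K b).symm.trans_le (le_iSup F b)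

end Subgroup

section Saturation

variable {H : Type u} [Group H] (c : Cardinal.{u}) (Y : Type u)

/-- `Classical.epsilon` picks a solution in `H` of each small system over `G` that has one; on the
other systems it returns junk, which only enlarges the subgroup. -/
noncomputable def saturate (G : Subgroup H) : Subgroup H :=
  G ⊔ closure (⋃ p : {s : Set (FreeGroup (G ⊕ Y)) // #s < c} ×
      {s : Set (FreeGroup (G ⊕ Y)) // #s < c},
    Set.range (Classical.epsilon fun v : Y → H => Solves G.subtype v p.1.1 p.2.1))

theorem le_saturate (G : Subgroup H) : G ≤ saturate c Y G := le_sup_left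

theorem exists_solves_mem_saturate {G : Subgroup H} {eqs ineqs : Set (FreeGroup (G ⊕ Y))}
    (h₁ : #eqs < c) (h₂ : #ineqs < c) (hs : ∃ v : Y → H, Solves G.subtype v eqs ineqs) :
    ∃ v : Y → H, (∀ y, v y ∈ saturate c Y G) ∧ Solves G.subtype v eqs ineqs :=
  ⟨_, fun y => mem_sup_right <| subset_closure <|
    Set.mem_iUnion.2 ⟨(⟨eqs, h₁⟩, ⟨ineqs, h₂⟩), y, rfl⟩, Classical.epsilon_spec hs⟩

variable {c Y}

theorem mk_saturate_le (hc : ℵ₀ ≤ c) (hpow : c ^< c = c) (hY : #Y ≤ c) {G : Subgroup H}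
    (hG : #G ≤ c) : #(saturate c Y G) ≤ c := by
  have hW : #(FreeGroup (G ⊕ Y)) ≤ c := by
    rw [mk_freeGroup, mk_sum, lift_id, lift_id]
    exact max_le ((add_le_add hG hY).trans (add_eq_self hc).le) hc
  have hsys := mk_setOf_mk_lt_le hc hpow hW
  refine mk_sup_le hc hG (mk_closure_le hc ((mk_iUnion_le _).trans ?_))
  rw [mk_prod, lift_id]
  calc _ ≤ c * c * c :=
        mul_le_mul' (mul_le_mul' hsys hsys) (ciSup_le' fun _ => mk_range_le.trans hY)
    _ = c := by rw [mul_eq_self hc, mul_eq_self hc]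

theorem isKappaEC_of_stepClosed_saturate {κ : Cardinal.{u}} (hc : ℵ₀ < c) (hcκ : c ≤ κ)
    (hH : IsKappaEC κ H) (hY : c ≤ #Y) {L : Subgroup H} (hL : StepClosed c (saturate c Y) L) :
    IsKappaEC c L := by
  refine isKappaEC_of_forall_solvableOver hc hY fun eqs ineqs h₁ h₂ hs => ?_
  obtain ⟨v, hv⟩ := hH.exists_solves L.subtype_injective (h₁.trans_le hcκ) (h₂.trans_le hcκ) hs
  obtain ⟨s, hs, hS⟩ := FreeGroup.exists_mk_lt_forall_mem_closure hc (S := eqs ∪ ineqs)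
    ((mk_union_le _ _).trans_lt (add_lt_of_lt hc.le h₁ h₂))
  obtain ⟨G, hCG, hGL⟩ := hL ((↑) '' (Sum.inl ⁻¹' s)) (by rintro _ ⟨x, -, rfl⟩; exact x.2)
    (mk_image_le.trans_lt ((mk_preimage_of_injective _ _ Sum.inl_injective).trans_lt hs))
  -- the coefficients of the system lie in `G`, so it is the image of a system over `G`
  have hGL' : G ≤ L := (le_saturate c Y G).trans hGL
  let ψ : G ⊕ Y → L ⊕ Y := Sum.map (inclusion hGL') id
  have hψ : Function.Injective (FreeGroup.map ψ) :=
    FreeGroup.map_injective (Sum.map_injective.2 ⟨inclusion_injective _, fun _ _ => id⟩)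
  have hrange : eqs ∪ ineqs ⊆ Set.range (FreeGroup.map ψ) := by
    intro w hw
    rw [← MonoidHom.coe_range, FreeGroup.range_map]
    refine closure_mono (Set.image_mono ?_) (hS w hw)
    rintro (a | y) ha
    · exact ⟨.inl ⟨a, hCG ⟨a, ha, rfl⟩⟩, rfl⟩
    · exact ⟨.inr y, rfl⟩
  have heqs := Set.image_preimage_eq_of_subset (Set.subset_union_left.trans hrange)
  have hineqs := Set.image_preimage_eq_of_subset (Set.subset_union_right.trans hrange)
  rw [← heqs, ← hineqs] at hv ⊢
  obtain ⟨v₁, hv₁G, hv₁⟩ := exists_solves_mem_saturate c Y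
    ((mk_preimage_of_injective _ _ hψ).trans_lt h₁) ((mk_preimage_of_injective _ _ hψ).trans_lt h₂)
    ⟨v, (solves_image_map_iff (inclusion hGL') id).1 hv⟩
  refine ⟨fun y => ⟨v₁ y, hGL (hv₁G y)⟩, (solves_comp_iff L.subtype_injective).1 ?_⟩
  exact (solves_image_map_iff (inclusion hGL') id).2 hv₁

end Saturation

/-- Let `λ ≤ κ` be uncountable cardinals with `λ^{<λ} = λ`, `H` a `κ`-existentially closed
group and `K ≤ H` a subgroup of cardinality `λ`. Then there is a `λ`-existentially closed
subgroup `K̄` of `H` of cardinality `λ` with `K ≤ K̄`. -/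
theorem stmt_11 (lam κ : Cardinal.{u}) (hlam : Cardinal.aleph0 < lam) (hle : lam ≤ κ)
    (hpow : lam ^< lam = lam)
    (H : Type u) [Group H] (hH : IsKappaEC κ H)
    (K : Subgroup H) (hK : Cardinal.mk K = lam) :
    ∃ Kbar : Subgroup H, K ≤ Kbar ∧ Cardinal.mk Kbar = lam ∧ IsKappaEC lam Kbar := by
  obtain ⟨Kbar, hKle, hcard, hclosed⟩ :=
    exists_stepClosed (isRegular_of_powerlt_eq_self hlam.le hpow) (le_saturate lam lam.out)
      (fun _ hG => mk_saturate_le hlam.le hpow (mk_out lam).le hG) hK.le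
  exact ⟨Kbar, hKle, hcard.antisymm (hK ▸ mk_le_mk_of_subset hKle),
    isKappaEC_of_stepClosed_saturate hlam hle hH (mk_out lam).ge hclosed⟩
end
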